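/- arXiv:2304.01050 — 4 statements merged into one kernel-verified Lean document; each statement's English description precedes it below -/
import Mathlib

section
/- Let T be a nonempty finite set, let X_i and Y_i be elements of a commutative ring for each i in T, and let c ∈ {1, -1}. Then the sum over all tuples (ε_i) ∈ {±1}^T with ∏_{i∈T} ε_i = c of the products ∏_{i∈T}(X_i + ε_i Y_i) equals 2^(#T - 1) · (∏_{i∈T} X_i + c · ∏_{i∈T} Y_i). -/
/-!
Fix an index `i₀`. A sign vector with product `c` is the same as an arbitrary sign vector `δ` on
the remaining indices, extended by `ε i₀ = c ∏ δ`. The sum therefore becomes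
`X i₀ ∑_δ ∏ (X j + δ j Y j) + c Y i₀ ∑_δ ∏ δ j (X j + δ j Y j)`, and both sums over all of
`{±1}^(T ∖ {i₀})` factor into the one-coordinate sums `∑_e (x + e y) = 2 x` and
`∑_e e (x + e y) = 2 y`.
-/

open Finset

namespace UnitsInt

variable {R : Type*} [CommRing R] {κ : Type*} [Fintype κ] [DecidableEq κ]

theorem sum_add_mul (x y : R) : ∑ e : ℤˣ, (x + ((e : ℤ) : R) * y) = 2 * x := by
  rw [UnitsInt.univ, sum_pair (units_ne_neg_self 1)]
  push_cast
  ring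

theorem sum_mul_add_mul (x y : R) :
    ∑ e : ℤˣ, ((e : ℤ) : R) * (x + ((e : ℤ) : R) * y) = 2 * y := by
  rw [UnitsInt.univ, sum_pair (units_ne_neg_self 1)]
  push_cast
  ring

theorem sum_pi_prod_add_mul (X Y : κ → R) :
    ∑ δ : κ → ℤˣ, ∏ j, (X j + ((δ j : ℤ) : R) * Y j) = 2 ^ Fintype.card κ * ∏ j, X j := by
  rw [← Fintype.prod_sum (fun j (e : ℤˣ) => X j + ((e : ℤ) : R) * Y j)]
  simp only [sum_add_mul, prod_mul_distrib, prod_const, card_univ]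

theorem sum_pi_prod_mul_prod_add_mul (X Y : κ → R) :
    ∑ δ : κ → ℤˣ, (∏ j, ((δ j : ℤ) : R)) * ∏ j, (X j + ((δ j : ℤ) : R) * Y j)
      = 2 ^ Fintype.card κ * ∏ j, Y j := by
  simp_rw [← prod_mul_distrib]
  rw [← Fintype.prod_sum (fun j (e : ℤˣ) => ((e : ℤ) : R) * (X j + ((e : ℤ) : R) * Y j))]
  simp only [sum_mul_add_mul, prod_mul_distrib, prod_const, card_univ]

end UnitsInt

section SplitAt

variable {ι G : Type*} [Fintype ι] [DecidableEq ι]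

theorem Equiv.prod_funSplitAt_symm_apply {M : Type*} [CommMonoid M] (f : ι → G → M) (i : ι)
    (e : G) (δ : {j // j ≠ i} → G) :
    ∏ j, f j ((Equiv.funSplitAt i G).symm (e, δ) j) = f i e * ∏ j : {j // j ≠ i}, f j (δ j) := by
  rw [Fintype.prod_eq_mul_prod_subtype_ne _ i]
  simp only [Equiv.funSplitAt_symm_apply, dite_true]
  exact congrArg _ (prod_congr rfl fun j _ => by rw [dif_neg j.2])

theorem Finset.sum_filter_prod_eq_sum_funSplitAt [CommGroup G] [Fintype G] [DecidableEq G]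
    {M : Type*} [AddCommMonoid M] (i : ι) (g : G) (F : (ι → G) → M) :
    ∑ ε ∈ univ.filter (fun ε : ι → G => ∏ j, ε j = g), F ε
      = ∑ δ : {j // j ≠ i} → G, F ((Equiv.funSplitAt i G).symm (g * (∏ j, δ j)⁻¹, δ)) := by
  rw [sum_filter, ← (Equiv.funSplitAt i G).symm.sum_comp, Fintype.sum_prod_type, sum_comm]
  refine sum_congr rfl fun δ _ => ?_
  have hprod (e : G) : ∏ j, (Equiv.funSplitAt i G).symm (e, δ) j = e * ∏ j, δ j :=
    Equiv.prod_funSplitAt_symm_apply (fun _ x => x) i e δ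
  simp_rw [hprod, ← eq_mul_inv_iff_mul_eq]
  exact Fintype.sum_ite_eq' _ _

end SplitAt

/-- Lemma 4.17 of Hanke–Ho (as used in the paper): for a nonempty finite index set,
the sum over sign vectors with prescribed product of the products `∏ (Xᵢ + εᵢ Yᵢ)`
equals `2^(#T - 1) (∏ Xᵢ + c ∏ Yᵢ)`. -/
theorem sum_over_signs_with_fixed_product {R : Type*} [CommRing R]
    {ι : Type*} [Fintype ι] [Nonempty ι] [DecidableEq ι]
    (X Y : ι → R) (c : ℤ) (hc : c = 1 ∨ c = -1) :
    ∑ ε ∈ Finset.univ.filter (fun ε : ι → ℤˣ => ∏ i, (ε i : ℤ) = c),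
        ∏ i, (X i + ((ε i : ℤ) : R) * Y i)
      = 2 ^ (Fintype.card ι - 1) * (∏ i, X i + (c : R) * ∏ i, Y i) := by
  obtain ⟨u, rfl⟩ : IsUnit c := Int.isUnit_iff.mpr hc
  obtain ⟨i₀⟩ := ‹Nonempty ι›
  have hfilter : (univ.filter fun ε : ι → ℤˣ => ∏ i, (ε i : ℤ) = u)
      = univ.filter fun ε : ι → ℤˣ => ∏ i, ε i = u := by
    simp_rw [← Units.coe_prod, Units.val_inj]
  have hsign (δ : {j // j ≠ i₀} → ℤˣ) :
      (((u * (∏ j, δ j)⁻¹ : ℤˣ) : ℤ) : R) = u * ∏ j, ((δ j : ℤ) : R) := by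
    rw [Int.units_inv_eq_self]
    push_cast
    rfl
  have hsummand (δ : {j // j ≠ i₀} → ℤˣ) :
      ∏ i, (X i + (((Equiv.funSplitAt i₀ ℤˣ).symm (u * (∏ j, δ j)⁻¹, δ) i : ℤ) : R) * Y i)
        = X i₀ * ∏ j : {j // j ≠ i₀}, (X j + ((δ j : ℤ) : R) * Y j)
          + u * Y i₀ * ((∏ j, ((δ j : ℤ) : R))
            * ∏ j : {j // j ≠ i₀}, (X j + ((δ j : ℤ) : R) * Y j)) := by
    rw [Equiv.prod_funSplitAt_symm_apply (fun i (e : ℤˣ) => X i + ((e : ℤ) : R) * Y i), hsign]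
    ring
  have hcard : Fintype.card {j // j ≠ i₀} = Fintype.card ι - 1 := by
    simp only [ne_eq, Fintype.card_subtype_compl, Fintype.card_unique]
  rw [hfilter, sum_filter_prod_eq_sum_funSplitAt i₀]
  simp_rw [hsummand, sum_add_distrib, ← mul_sum, UnitsInt.sum_pi_prod_add_mul,
    UnitsInt.sum_pi_prod_mul_prod_add_mul, hcard, Fintype.prod_eq_mul_prod_subtype_ne _ i₀]
  ring
end

section
/- Let K be a field of characteristic not 2, and let f(x,y) = ax³ + bx²y + cxy² + dy³ ∈ K[x,y] with a·d ≠ 0. Then the pair of symmetric matrices (A,B) with A = [[-a,0,0],[0,0,1/2],[0,1/2,b/(4ad)]] and B = [[0,0,1/2],[0,d,0],[1/2,0,-c/(4ad)]] satisfies 4·det(xA - yB) = f(x,y). -/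
open Matrix

theorem four_mul_det_smul_sub_smul {K : Type*} [Field K] (h2 : (2 : K) ≠ 0) (a d e f x y : K) :
    4 * det (x • !![-a, 0, 0; 0, 0, 1 / 2; 0, 1 / 2, e] - y • !![0, 0, 1 / 2; 0, d, 0; 1 / 2, 0, -f])
      = a * x ^ 3 + 4 * a * d * e * x ^ 2 * y + 4 * a * d * f * x * y ^ 2 + d * y ^ 3 := by
  rw [det_fin_three]
  simp only [Matrix.sub_apply, Matrix.smul_apply, smul_eq_mul, of_apply, cons_val', cons_val_zero,
    cons_val_one, cons_val_two, head_cons, tail_cons, empty_val', cons_val_fin_one, head_fin_const]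
  field_simp
  ring

/-- The explicit pair of symmetric matrices representing the Δ-distinguished
orbit has resolvent `4 det(xA - yB) = ax³ + bx²y + cxy² + dy³`. -/
theorem delta_distinguished_resolvent {K : Type*} [Field K] (h2 : (2 : K) ≠ 0)
    (a b c d : K) (ha : a ≠ 0) (hd : d ≠ 0) :
    ∀ x y : K,
      4 * Matrix.det
          (x • !![-a, 0, 0; 0, 0, 1 / 2; 0, 1 / 2, b / (4 * a * d)]
            - y • !![0, 0, 1 / 2; 0, d, 0; 1 / 2, 0, -c / (4 * a * d)])
        = a * x ^ 3 + b * x ^ 2 * y + c * x * y ^ 2 + d * y ^ 3 := by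
  intro x y
  have h4 : (4 : K) ≠ 0 := by simpa [← two_add_two_eq_four, ← two_mul] using mul_ne_zero h2 h2
  have h4ad : 4 * a * d ≠ 0 := mul_ne_zero (mul_ne_zero h4 ha) hd
  rw [neg_div, four_mul_det_smul_sub_smul h2, mul_div_cancel₀ b h4ad, mul_div_cancel₀ c h4ad]
end

section
/- Let f be a monic cubic polynomial over ℝ with three distinct real roots r₁ < r₂ < r₃. Set A₁ = diag(-1, 1, -1) and B₁ = diag(-r₁, r₂, -r₃). Then det(x·A₁ - B₁) = f(x), and the quadratic forms A₁ and B₁ have a common nonzero real zero, i.e., there is a nonzero v ∈ ℝ³ with vᵀA₁v = 0 and vᵀB₁v = 0. -/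
/-!
Both matrices are diagonal, so the determinant is the product of the diagonal entries
`(-x + r₁)(x - r₂)(-x + r₃) = f x`, and both quadratic forms are linear in the squares
`v i ^ 2`. A common zero therefore comes from a nonnegative nonzero vector `w` orthogonal to
both diagonals: their cross product `(r₃ - r₂, r₃ - r₁, r₂ - r₁)` is such a vector because the
roots are ordered, and `v i = √(w i)` is the required common zero.
-/

open Matrix

theorem det_smul_diagonal_sub_diagonal {n R : Type*} [Fintype n] [DecidableEq n] [CommRing R]
    (x : R) (a b : n → R) :
    (x • diagonal a - diagonal b).det = ∏ i, (x * a i - b i) := by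
  rw [← diagonal_smul, diagonal_sub, det_diagonal]
  rfl

theorem dotProduct_diagonal_mulVec_self {n R : Type*} [Fintype n] [DecidableEq n] [CommRing R]
    (d v : n → R) :
    v ⬝ᵥ diagonal d *ᵥ v = ∑ i, d i * v i ^ 2 := by
  simp only [dotProduct, mulVec_diagonal]
  exact Finset.sum_congr rfl fun i _ => by ring

theorem dotProduct_diagonal_mulVec_sqrt {n : Type*} [Fintype n] [DecidableEq n]
    (d w : n → ℝ) (hw : 0 ≤ w) :
    (fun i => √(w i)) ⬝ᵥ diagonal d *ᵥ (fun i => √(w i)) = ∑ i, d i * w i := by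
  simp only [dotProduct_diagonal_mulVec_self, Real.sq_sqrt (hw _)]

/-- For a monic real cubic `f` with distinct real roots `r₁ < r₂ < r₃`, the pair
`A₁ = diag(-1,1,-1)`, `B₁ = diag(-r₁,r₂,-r₃)` satisfies `det(xA₁ - B₁) = f(x)`,
and the quadratic forms `A₁` and `B₁` have a common nonzero real zero. -/
theorem diag_pair_resolvent_and_common_zero (r₁ r₂ r₃ : ℝ) (f : ℝ → ℝ)
    (h12 : r₁ < r₂) (h23 : r₂ < r₃)
    (hf : ∀ x : ℝ, f x = (x - r₁) * (x - r₂) * (x - r₃)) :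
    (∀ x : ℝ,
      Matrix.det (x • Matrix.diagonal ![(-1 : ℝ), 1, -1]
          - Matrix.diagonal ![-r₁, r₂, -r₃]) = f x) ∧
    ∃ v : Fin 3 → ℝ, v ≠ 0 ∧
      v ⬝ᵥ (Matrix.diagonal ![(-1 : ℝ), 1, -1]).mulVec v = 0 ∧
      v ⬝ᵥ (Matrix.diagonal ![-r₁, r₂, -r₃]).mulVec v = 0 := by
  refine ⟨fun x => ?_, ?_⟩
  · rw [det_smul_diagonal_sub_diagonal, Fin.prod_univ_three, hf]
    simp only [Matrix.cons_val]
    ring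
  set w : Fin 3 → ℝ := ![r₃ - r₂, r₃ - r₁, r₂ - r₁]
  have hw : 0 ≤ w := by
    intro i
    fin_cases i <;> simp [w] <;> linarith
  refine ⟨fun i => √(w i), fun h => ?_, ?_, ?_⟩
  · exact Real.sqrt_ne_zero'.2 (sub_pos.2 h23) (congrFun h 0)
  all_goals
    rw [dotProduct_diagonal_mulVec_sqrt _ _ hw, Fin.sum_univ_three]
    simp only [w, Matrix.cons_val]
    ring
end

section
/- Let p be a prime and let a, d be integers with p | a and p ∤ d. The number of pairs (b,c) ∈ (ℤ/p²ℤ)² such that the binary cubic form ax³ + bx²y + cxy² + dy³ over ℤ/p²ℤ reduces mod p to a form with a triple root at (1,0) — i.e., p | b and p | c — and satisfies Dedekind's criterion, equals p² if p exactly divides a (ν_p(a) = 1), and 0 if p² | a. -/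
/-! If `p ∥ a`, a unimodular substitution with `p² ∣ f(α, β)` forces `p ∣ dβ³`, hence `p ∣ β`;
then `α` is a unit mod `p` and `f(α, β) ≡ aα³ (mod p²)` gives `p² ∣ a`, a contradiction. So all
`p · p` pairs with `p ∣ b` and `p ∣ c` qualify. If `p² ∣ a`, the identity substitution already
violates the criterion. -/

open scoped Classical

/-- Dedekind's criterion for a binary cubic form `ax³ + bx²y + cxy² + dy³` over a
commutative ring with respect to a "uniformizer" `π`: the form is primitive, and no
unimodular change of variables `(x,y) ↦ (αx + γy, βx + δy)` makes the `x³`-coefficient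
divisible by `π²` and the `x²y`-coefficient divisible by `π`. -/
def SatisfiesDedekind {R : Type*} [CommRing R] (π a b c d : R) : Prop :=
  (¬ (π ∣ a ∧ π ∣ b ∧ π ∣ c ∧ π ∣ d)) ∧
  ¬ ∃ α β γ δ : R, α * δ - β * γ = 1 ∧
      π ^ 2 ∣ (a * α ^ 3 + b * α ^ 2 * β + c * α * β ^ 2 + d * β ^ 3) ∧
      π ∣ (3 * a * α ^ 2 * γ + b * (α ^ 2 * δ + 2 * α * β * γ)
            + c * (β ^ 2 * γ + 2 * α * β * δ) + 3 * d * β ^ 2 * δ)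

section SatisfiesDedekind

variable {R : Type*} [CommRing R] {π a b c d : R}

theorem not_satisfiesDedekind_of_sq_dvd (ha : π ^ 2 ∣ a) (hb : π ∣ b) :
    ¬ SatisfiesDedekind π a b c d := fun h =>
  h.2 ⟨1, 0, 0, 1, by ring, by simpa using ha, by simpa using hb⟩

theorem sq_dvd_of_sq_dvd_mul_of_dvd_mul_sub_one {u v : R} (ha : π ∣ a) (huv : π ∣ u * v - 1)
    (hau : π ^ 2 ∣ a * u) : π ^ 2 ∣ a := by
  have : a = a * u * v - a * (u * v - 1) := by ring
  rw [this, sq]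
  exact dvd_sub ((sq π ▸ hau).mul_right v) (mul_dvd_mul ha huv)

theorem satisfiesDedekind_of_dvd_of_not_sq_dvd (hπ : Prime π) (ha : π ∣ a)
    (ha2 : ¬ π ^ 2 ∣ a) (hb : π ∣ b) (hc : π ∣ c) (hd : ¬ π ∣ d) :
    SatisfiesDedekind π a b c d := by
  refine ⟨fun h => hd h.2.2.2, ?_⟩
  rintro ⟨α, β, γ, δ, hdet, hform, -⟩
  have hβ : π ∣ β := by
    have hrest : π ∣ a * α ^ 3 + b * α ^ 2 * β + c * α * β ^ 2 :=
      dvd_add (dvd_add (ha.mul_right _) ((hb.mul_right _).mul_right _))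
        ((hc.mul_right _).mul_right _)
    have hdβ : π ∣ d * β ^ 3 :=
      (dvd_add_right hrest).mp ((dvd_pow_self π two_ne_zero).trans hform)
    exact hπ.dvd_of_dvd_pow ((hπ.dvd_or_dvd hdβ).resolve_left hd)
  obtain ⟨b', rfl⟩ := hb
  obtain ⟨c', rfl⟩ := hc
  obtain ⟨β', rfl⟩ := hβ
  refine ha2 (sq_dvd_of_sq_dvd_mul_of_dvd_mul_sub_one ha (u := α ^ 3) (v := δ ^ 3) ?_ ?_)
  · -- `αδ ≡ 1 (mod π)` because `αδ - 1 = βγ`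
    refine ⟨γ * β' * ((α * δ) ^ 2 + α * δ + 1), ?_⟩
    linear_combination ((α * δ) ^ 2 + α * δ + 1) * hdet
  · have hrest : π ^ 2 ∣ π * b' * α ^ 2 * (π * β') + π * c' * α * (π * β') ^ 2
        + d * (π * β') ^ 3 :=
      ⟨b' * α ^ 2 * β' + c' * α * π * β' ^ 2 + d * π * β' ^ 3, by ring⟩
    convert dvd_sub hform hrest using 1
    ring

end SatisfiesDedekind

namespace ZMod

theorem natCast_dvd_intCast_iff {m n : ℕ} (hmn : m ∣ n) (z : ℤ) :
    (m : ZMod n) ∣ (z : ZMod n) ↔ (m : ℤ) ∣ z := by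
  refine ⟨fun ⟨w, hw⟩ => ?_, fun h => by simpa using map_dvd (Int.castRingHom (ZMod n)) h⟩
  rw [← intCast_zmod_eq_zero_iff_dvd, ← map_intCast (castHom hmn (ZMod m)), hw, map_mul,
    map_natCast, natCast_self, zero_mul]

theorem natCast_dvd_iff_castHom_eq_zero {m n : ℕ} (hmn : m ∣ n) (x : ZMod n) :
    (m : ZMod n) ∣ x ↔ castHom hmn (ZMod m) x = 0 := by
  obtain ⟨z, rfl⟩ := intCast_surjective x
  rw [map_intCast, intCast_zmod_eq_zero_iff_dvd, natCast_dvd_intCast_iff hmn]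

theorem card_natCast_dvd_mul {m n : ℕ} (hmn : m ∣ n) :
    Nat.card {x : ZMod n // (m : ZMod n) ∣ x} * m = n := by
  let f := (castHom hmn (ZMod m)).toAddMonoidHom
  have hker : {x : ZMod n // (m : ZMod n) ∣ x} ≃ f.ker :=
    Equiv.subtypeEquivRight (natCast_dvd_iff_castHom_eq_zero hmn)
  have := f.ker.card_mul_index
  rwa [AddSubgroup.index_ker, f.range_eq_top_of_surjective (castHom_surjective hmn),
    AddSubgroup.card_top, Nat.card_zmod, Nat.card_zmod, ← Nat.card_congr hker] at this

theorem prime_natCast {p n : ℕ} (hp : p.Prime) (hpn : p ∣ n) (hnp : ¬ n ∣ p) :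
    Prime (p : ZMod n) := by
  have hdvd := natCast_dvd_intCast_iff hpn
  have hp' : Prime (p : ℤ) := Nat.prime_iff_prime_int.mp hp
  refine ⟨mt (natCast_eq_zero_iff p n).mp hnp, fun hu => ?_, fun x y hxy => ?_⟩
  · exact hp'.not_dvd_one ((hdvd 1).mp (by exact_mod_cast hu.dvd))
  · obtain ⟨x, rfl⟩ := intCast_surjective x
    obtain ⟨y, rfl⟩ := intCast_surjective y
    rw [← Int.cast_mul, hdvd] at hxy
    rw [hdvd, hdvd]
    exact hp'.dvd_or_dvd hxy

end ZMod

/-- For a prime `p` with `p ∣ a` and `p ∤ d`, the number of pairs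
`(b,c) ∈ (ℤ/p²ℤ)²` such that `ax³ + bx²y + cxy² + dy³` has a triple root at `(1,0)`
mod `p` (i.e. `p ∣ b` and `p ∣ c`) and satisfies Dedekind's criterion is `p²` if
`p` exactly divides `a`, and `0` if `p² ∣ a`. -/
theorem count_triple_root_dedekind (p : ℕ) (hp : p.Prime) (a d : ℤ)
    (hpa : (p : ℤ) ∣ a) (hpd : ¬ (p : ℤ) ∣ d) :
    Nat.card {bc : ZMod (p ^ 2) × ZMod (p ^ 2) //
        (p : ZMod (p ^ 2)) ∣ bc.1 ∧ (p : ZMod (p ^ 2)) ∣ bc.2 ∧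
        SatisfiesDedekind (p : ZMod (p ^ 2)) (a : ZMod (p ^ 2)) bc.1 bc.2
          (d : ZMod (p ^ 2))}
      = if (p : ℤ) ^ 2 ∣ a then 0 else p ^ 2 := by
  have hp_dvd : p ∣ p ^ 2 := dvd_pow_self p two_ne_zero
  have hdvd := ZMod.natCast_dvd_intCast_iff hp_dvd
  have hsq : (p : ZMod (p ^ 2)) ^ 2 ∣ (a : ZMod (p ^ 2)) ↔ (p : ℤ) ^ 2 ∣ a := by
    exact_mod_cast ZMod.natCast_dvd_intCast_iff (dvd_refl (p ^ 2)) a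
  split_ifs with ha2
  · exact Nat.card_eq_zero.mpr (.inl ⟨fun ⟨_, hb, _, hD⟩ =>
      not_satisfiesDedekind_of_sq_dvd (hsq.mpr ha2) hb hD⟩)
  · have hπ : Prime (p : ZMod (p ^ 2)) := ZMod.prime_natCast hp hp_dvd
      fun h => by nlinarith [Nat.le_of_dvd hp.pos h, hp.two_le]
    have hcount : ∀ bc : ZMod (p ^ 2) × ZMod (p ^ 2),
        ((p : ZMod (p ^ 2)) ∣ bc.1 ∧ (p : ZMod (p ^ 2)) ∣ bc.2 ∧
          SatisfiesDedekind (p : ZMod (p ^ 2)) (a : ZMod (p ^ 2)) bc.1 bc.2 (d : ZMod (p ^ 2)))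
        ↔ ((p : ZMod (p ^ 2)) ∣ bc.1 ∧ (p : ZMod (p ^ 2)) ∣ bc.2) :=
      fun _ => ⟨fun h => ⟨h.1, h.2.1⟩, fun ⟨hb, hc⟩ => ⟨hb, hc,
        satisfiesDedekind_of_dvd_of_not_sq_dvd hπ ((hdvd a).mpr hpa) (mt hsq.mp ha2) hb hc
          (mt (hdvd d).mp hpd)⟩⟩
    have hcard : Nat.card {x : ZMod (p ^ 2) // (p : ZMod (p ^ 2)) ∣ x} = p :=
      Nat.eq_of_mul_eq_mul_right hp.pos (by rw [ZMod.card_natCast_dvd_mul hp_dvd, sq])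
    rw [Nat.card_congr ((Equiv.subtypeEquivRight hcount).trans Equiv.subtypeProdEquivProd),
      Nat.card_prod, hcard, sq]
end
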